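/- arXiv:1104.4389 — 2 statements merged into one kernel-verified Lean document; each statement's English description precedes it below -/
import Mathlib

section
/- Let X and Y be jointly Gaussian, each standard normal, with correlation ρ ∈ (−1, 1). With u_n(y) = y/a_n + b_n where a_n = (2 log n)^{1/2} and b_n = (2 log n)^{1/2} − (1/2)(2 log n)^{-1/2}(log log n + log 4π), then for all y, z ∈ ℝ, lim_{n→∞} n P(X ≥ u_n(y), Y ≥ u_n(z)) = 0. -/
/-!
On the joint exceedance event `X + Y ≥ u_n(y) + u_n(z) ≈ 2√(2 log n)`, and `X + Y` is a centred
Gaussian of variance `2(1 + ρ) < 4`. The Chernoff bound therefore gives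
`n P(X + Y ≥ u_n(y) + u_n(z)) ≤ n exp(-(1 + o(1)) · 2 log n / (1 + ρ)) = n^{-(1 - ρ)/(1 + ρ) + o(1)}`.
-/

open MeasureTheory ProbabilityTheory Filter Real
open scoped NNReal Topology

lemma hasSubgaussianMGF_of_map_eq_gaussianReal {Ω : Type*} [MeasurableSpace Ω] {P : Measure Ω}
    [IsProbabilityMeasure P] {Z : Ω → ℝ} {v : ℝ≥0} (hZ : P.map Z = gaussianReal 0 v) :
    HasSubgaussianMGF Z v P where
  integrable_exp_mul t := by
    rw [← mgf_pos_iff, mgf_gaussianReal hZ]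
    exact exp_pos _
  mgf_le t := by simp [mgf_gaussianReal hZ]

lemma measureReal_le_mul_add_mul_le_of_indepFun {Ω : Type*} [MeasurableSpace Ω] {P : Measure Ω}
    [IsProbabilityMeasure P] {Z₀ Z₁ : Ω → ℝ} (hindep : IndepFun Z₀ Z₁ P)
    (h₀ : P.map Z₀ = gaussianReal 0 1) (h₁ : P.map Z₁ = gaussianReal 0 1)
    (a b : ℝ) {ε : ℝ} (hε : 0 ≤ ε) :
    P.real {ω | ε ≤ a * Z₀ ω + b * Z₁ ω} ≤ exp (-ε ^ 2 / (2 * (a ^ 2 + b ^ 2))) := by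
  have h := ((hasSubgaussianMGF_of_map_eq_gaussianReal h₀).const_mul a).add_of_indepFun
    ((hasSubgaussianMGF_of_map_eq_gaussianReal h₁).const_mul b)
    (hindep.comp (measurable_const_mul a) (measurable_const_mul b))
  convert h.measure_ge_le hε using 5
  -- `simp` cannot push the coercion through the `ℝ≥0` variance `⟨a ^ 2, _⟩ * 1 + ⟨b ^ 2, _⟩ * 1`
  show a ^ 2 + b ^ 2 = a ^ 2 * 1 + b ^ 2 * 1
  ring

/-- The expression is the norming constant `u_n(y)` written in terms of `L = log n`. -/
lemma tendsto_gaussianThreshold_div_sqrt (y : ℝ) :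
    Tendsto (fun L : ℝ => (y / √(2 * L) + (√(2 * L) -
      1 / 2 * (√(2 * L))⁻¹ * (log L + log (4 * π)))) / √(2 * L)) atTop (𝓝 1) := by
  have hlog : Tendsto (fun L : ℝ => log L / L) atTop (𝓝 0) :=
    isLittleO_log_id_atTop.tendsto_div_nhds_zero
  have hlim := ((tendsto_inv_atTop_zero.const_mul (y / 2 - log (4 * π) / 4)).const_add 1).sub
    (hlog.const_mul (1 / 4))
  rw [mul_zero, add_zero, mul_zero, sub_zero] at hlim
  refine hlim.congr' ?_
  filter_upwards [eventually_gt_atTop 0] with L hL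
  have hs : √(2 * L) ^ 2 = 2 * L := sq_sqrt (by positivity)
  field_simp
  rw [hs]
  ring

lemma tendsto_natCast_mul_exp_neg_sq_div {w : ℕ → ℝ} {c v : ℝ} (hv : 0 < v) (hvc : v < c ^ 2)
    (hw : Tendsto (fun n : ℕ => w n / √(2 * log n)) atTop (𝓝 c)) :
    Tendsto (fun n : ℕ => n * exp (-w n ^ 2 / (2 * v))) atTop (𝓝 0) := by
  have hlog : Tendsto (fun n : ℕ => log n) atTop atTop :=
    tendsto_log_atTop.comp tendsto_natCast_atTop_atTop
  have hexponent : Tendsto (fun n : ℕ => log n * (1 - (w n / √(2 * log n)) ^ 2 / v))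
      atTop atBot :=
    hlog.atTop_mul_neg (by rw [sub_neg, one_lt_div hv]; exact hvc)
      (((hw.pow 2).div_const v).const_sub 1)
  refine (tendsto_exp_atBot.comp hexponent).congr' ?_
  filter_upwards [eventually_gt_atTop 1] with n hn
  have hn' : (1 : ℝ) < n := by exact_mod_cast hn
  have hL : 0 < log n := log_pos hn'
  rw [Function.comp_apply, div_pow, sq_sqrt (by positivity)]
  conv_rhs => rw [← exp_log (zero_lt_one.trans hn')]
  rw [← exp_add]
  congr 1
  field_simp
  ring

theorem bivariate_gaussian_joint_tail_negligible_general
    {Ω : Type*} [MeasurableSpace Ω] (P : Measure Ω) [IsProbabilityMeasure P]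
    (ρ : ℝ) (hρ : ρ ∈ Set.Ioo (-1 : ℝ) 1)
    (Z0 Z1 : Ω → ℝ)
    (hindep : IndepFun Z0 Z1 P)
    (hg0 : P.map Z0 = gaussianReal 0 1) (hg1 : P.map Z1 = gaussianReal 0 1)
    (X Y : Ω → ℝ) (hX : ∀ ω, X ω = Z0 ω)
    (hY : ∀ ω, Y ω = ρ * Z0 ω + Real.sqrt (1 - ρ ^ 2) * Z1 ω)
    (an bn : ℕ → ℝ)
    (han : ∀ n, an n = Real.sqrt (2 * Real.log n))
    (hbn : ∀ n, bn n = Real.sqrt (2 * Real.log n) -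
      (1 / 2) * (Real.sqrt (2 * Real.log n))⁻¹ *
        (Real.log (Real.log n) + Real.log (4 * Real.pi)))
    (u : ℕ → ℝ → ℝ) (hu : ∀ n y, u n y = y / an n + bn n)
    (y z : ℝ) :
    Tendsto (fun n : ℕ =>
        (n : ℝ) * (P {ω | X ω ≥ u n y ∧ Y ω ≥ u n z}).toReal)
      atTop (nhds 0) := by
  obtain ⟨hρ₁, hρ₂⟩ := hρ
  have hthreshold (x : ℝ) : Tendsto (fun n : ℕ => u n x / √(2 * log n)) atTop (𝓝 1) := by
    simp only [hu, han, hbn]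
    exact (tendsto_gaussianThreshold_div_sqrt x).comp
      (tendsto_log_atTop.comp tendsto_natCast_atTop_atTop)
  have hsum : Tendsto (fun n : ℕ => (u n y + u n z) / √(2 * log n)) atTop (𝓝 2) := by
    simpa only [add_div, one_add_one_eq_two] using (hthreshold y).add (hthreshold z)
  have hvar : (1 + ρ) ^ 2 + √(1 - ρ ^ 2) ^ 2 = 2 * (1 + ρ) := by
    rw [sq_sqrt (by nlinarith)]
    ring
  have hbound := tendsto_natCast_mul_exp_neg_sq_div (v := 2 * (1 + ρ)) (by linarith)
    (by nlinarith) hsum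
  refine tendsto_of_tendsto_of_tendsto_of_le_of_le' tendsto_const_nhds hbound
    (Eventually.of_forall fun n => by positivity) ?_
  filter_upwards [hsum.eventually (lt_mem_nhds two_pos)] with n hn
  have hpos : 0 ≤ u n y + u n z :=
    ((div_pos_iff.mp hn).resolve_right fun h => (sqrt_nonneg _).not_gt h.2).1.le
  have hsub : {ω | X ω ≥ u n y ∧ Y ω ≥ u n z}
      ⊆ {ω | u n y + u n z ≤ (1 + ρ) * Z0 ω + √(1 - ρ ^ 2) * Z1 ω} := by
    rintro ω ⟨hXω, hYω⟩
    rw [hX] at hXω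
    rw [hY] at hYω
    show u n y + u n z ≤ _
    linarith
  gcongr
  calc P.real {ω | X ω ≥ u n y ∧ Y ω ≥ u n z}
      ≤ P.real {ω | u n y + u n z ≤ (1 + ρ) * Z0 ω + √(1 - ρ ^ 2) * Z1 ω} :=
        measureReal_mono hsub
    _ ≤ _ := measureReal_le_mul_add_mul_le_of_indepFun hindep hg0 hg1 _ _ hpos
    _ = _ := by rw [hvar]

/-- Asymptotic independence of bivariate Gaussian extremes: if `(X,Y)` is
jointly Gaussian with standard normal marginals and correlation `ρ ∈ (−1,1)`
(realized as `X = Z₀`, `Y = ρ Z₀ + √(1−ρ²) Z₁` with `Z₀, Z₁` independent standard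
normals), then `n P(X ≥ u_n(y), Y ≥ u_n(z)) → 0`. -/
theorem bivariate_gaussian_joint_tail_negligible
    {Ω : Type*} [MeasurableSpace Ω] (P : Measure Ω) [IsProbabilityMeasure P]
    (ρ : ℝ) (hρ : ρ ∈ Set.Ioo (-1 : ℝ) 1)
    (Z0 Z1 : Ω → ℝ) (hZ0 : Measurable Z0) (hZ1 : Measurable Z1)
    (hindep : IndepFun Z0 Z1 P)
    (hg0 : P.map Z0 = gaussianReal 0 1) (hg1 : P.map Z1 = gaussianReal 0 1)
    (X Y : Ω → ℝ) (hX : ∀ ω, X ω = Z0 ω)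
    (hY : ∀ ω, Y ω = ρ * Z0 ω + Real.sqrt (1 - ρ ^ 2) * Z1 ω)
    (an bn : ℕ → ℝ)
    (han : ∀ n, an n = Real.sqrt (2 * Real.log n))
    (hbn : ∀ n, bn n = Real.sqrt (2 * Real.log n) -
      (1 / 2) * (Real.sqrt (2 * Real.log n))⁻¹ *
        (Real.log (Real.log n) + Real.log (4 * Real.pi)))
    (u : ℕ → ℝ → ℝ) (hu : ∀ n y, u n y = y / an n + bn n)
    (y z : ℝ) :
    Tendsto (fun n : ℕ =>
        (n : ℝ) * (P {ω | X ω ≥ u n y ∧ Y ω ≥ u n z}).toReal)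
      atTop (nhds 0) :=
  bivariate_gaussian_joint_tail_negligible_general P ρ hρ Z0 Z1 hindep hg0 hg1 X Y hX hY an bn han
    hbn u hu y z
end

section
/- Let W be a standard Brownian motion, q : [a,b] → (0,∞) continuously differentiable with q, q^{-1}, q' bounded on [a,b], and let [x_{i-1}, x_i] ⊂ [a,b] with length h = x_i − x_{i−1}. Let φ be C^1 on [x_{i−1}, x_i] with |φ| ≤ C h^{−1/2} and |φ'| ≤ C h^{−3/2}. For x ∈ [x_{i−1}, x_i], define H(x) = q^{-1}(x) ∫_{x_{i-1}}^{x_i} q(u) φ(u) dW(u) − ∫_{x_{i-1}}^{x_i} φ(u) dW(u). Then there is a constant K, depending only on C and the bounds on q, q^{-1}, q', such that almost surely sup_{x ∈ [x_{i−1},x_i]} |H(x)| ≤ K h^{1/2} sup_{u∈[x_{i−1},x_i]} |W(u)|. -/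
/-!
By linearity of the integral, `H(x) = q(x)⁻¹ ∫ (q - q(x)) φ dW`. Integrating by parts, this is
bounded by `sup |W|` times `2 sup |(q - q(x)) φ| + h sup |((q - q(x)) φ)'|`. Since
`|q(u) - q(x)| ≤ ‖q'‖_∞ h` on an interval of length `h`, every term is of size
`‖q'‖_∞ C h^{1/2}`: the Lipschitz bound on `q` gains exactly the factor `h` that turns the
`h^{-1/2}` and `h^{-3/2}` bounds on `φ` and `φ'` into `h^{1/2}`.
-/

open MeasureTheory Set intervalIntegral

/-- The pathwise Wiener integral `∫_c^d f dW` of a `C¹` integrand `f` against a continuous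
path `w`, defined through the integration-by-parts formula
`∫_c^d f dW = f(d) w(d) − f(c) w(c) − ∫_c^d f'(u) w(u) du`. -/
noncomputable def wienerIntegralIBP (c d : ℝ) (f : ℝ → ℝ) (w : ℝ → ℝ) : ℝ :=
  f d * w d - f c * w c - ∫ u in c..d, deriv f u * w u

theorem abs_mul_le_of_abs_le {a b A B : ℝ} (ha : |a| ≤ A) (hb : |b| ≤ B) : |a * b| ≤ A * B :=
  norm_mul_le_of_le (a₁ := a) (a₂ := b) ha hb

theorem abs_le_ciSup_Icc {w : ℝ → ℝ} (hw : Continuous w) {c d u : ℝ} (hu : u ∈ Icc c d) :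
    |w u| ≤ ⨆ t : Icc c d, |w t| := by
  have hbdd := isCompact_Icc.bddAbove_image (f := fun t => |w t|) (K := Icc c d)
    hw.abs.continuousOn
  rw [image_eq_range] at hbdd
  exact le_ciSup hbdd ⟨u, hu⟩

theorem abs_sub_le_mul_of_abs_deriv_le {f : ℝ → ℝ} (hf : Differentiable ℝ f) {c d L : ℝ}
    (hf' : ∀ u ∈ Icc c d, |deriv f u| ≤ L) {x y : ℝ} (hx : x ∈ Icc c d) (hy : y ∈ Icc c d) :
    |f y - f x| ≤ L * (d - c) := by
  have hL : 0 ≤ L := (abs_nonneg _).trans (hf' x hx)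
  calc |f y - f x| ≤ L * |y - x| :=
        (convex_Icc c d).norm_image_sub_le_of_norm_deriv_le (fun u _ => hf u) hf' hx hy
    _ ≤ L * (d - c) := by
        gcongr
        exact abs_sub_le_iff.2 ⟨by linarith [hx.1, hy.2], by linarith [hx.2, hy.1]⟩

theorem wienerIntegralIBP_sub_const_mul {f g w : ℝ → ℝ} (hf : ContDiff ℝ 1 f)
    (hg : ContDiff ℝ 1 g) (hw : Continuous w) (c d k : ℝ) :
    wienerIntegralIBP c d (fun u => f u - k * g u) w
      = wienerIntegralIBP c d f w - k * wienerIntegralIBP c d g w := by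
  have hderiv : ∀ u, deriv (fun u => f u - k * g u) u = deriv f u - k * deriv g u := fun u =>
    (((hf.differentiable one_ne_zero u).hasDerivAt).sub
      (((hg.differentiable one_ne_zero u).hasDerivAt).const_mul k)).deriv
  have hfw : IntervalIntegrable (fun u => deriv f u * w u) volume c d :=
    (hf.continuous_deriv_one.mul hw).intervalIntegrable c d
  have hgw : IntervalIntegrable (fun u => deriv g u * w u) volume c d :=
    (hg.continuous_deriv_one.mul hw).intervalIntegrable c d
  have hint : ∫ u in c..d, deriv (fun u => f u - k * g u) u * w u
      = (∫ u in c..d, deriv f u * w u) - k * ∫ u in c..d, deriv g u * w u := by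
    rw [← intervalIntegral.integral_const_mul, ← integral_sub hfw (hgw.const_mul k)]
    refine integral_congr fun u _ => ?_
    simp only [hderiv]
    ring
  simp only [wienerIntegralIBP, hint]
  ring

theorem abs_wienerIntegralIBP_le {f w : ℝ → ℝ} {c d A B S : ℝ} (hcd : c ≤ d)
    (hf : ∀ u ∈ Icc c d, |f u| ≤ A) (hf' : ∀ u ∈ Icc c d, |deriv f u| ≤ B)
    (hw : ∀ u ∈ Icc c d, |w u| ≤ S) :
    |wienerIntegralIBP c d f w| ≤ (2 * A + (d - c) * B) * S := by
  have hc : c ∈ Icc c d := left_mem_Icc.2 hcd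
  have hd : d ∈ Icc c d := right_mem_Icc.2 hcd
  have hIoc : ∀ u ∈ uIoc c d, u ∈ Icc c d := fun u hu =>
    Ioc_subset_Icc_self (by rwa [uIoc_of_le hcd] at hu)
  have hint : |∫ u in c..d, deriv f u * w u| ≤ B * S * (d - c) := by
    have := norm_integral_le_of_norm_le_const (f := fun u => deriv f u * w u) (C := B * S)
      fun u hu => abs_mul_le_of_abs_le (hf' u (hIoc u hu)) (hw u (hIoc u hu))
    rwa [abs_of_nonneg (sub_nonneg.2 hcd)] at this
  calc |wienerIntegralIBP c d f w|
      ≤ |f d * w d| + |f c * w c| + |∫ u in c..d, deriv f u * w u| :=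
        (abs_sub _ _).trans (add_le_add_left (abs_sub _ _) _)
    _ ≤ A * S + A * S + B * S * (d - c) := by
        gcongr
        · exact abs_mul_le_of_abs_le (hf d hd) (hw d hd)
        · exact abs_mul_le_of_abs_le (hf c hc) (hw c hc)
    _ = (2 * A + (d - c) * B) * S := by ring

theorem abs_wienerIntegralIBP_sub_mul_le {q φ w : ℝ → ℝ} {c d k L C S : ℝ} (hcd : c < d)
    (hq : Differentiable ℝ q) (hφ : Differentiable ℝ φ)
    (hq' : ∀ u ∈ Icc c d, |deriv q u| ≤ L) (hqk : ∀ u ∈ Icc c d, |q u - k| ≤ L * (d - c))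
    (hφb : ∀ u ∈ Icc c d, |φ u| ≤ C * (d - c) ^ (-(1:ℝ)/2))
    (hφ'b : ∀ u ∈ Icc c d, |deriv φ u| ≤ C * (d - c) ^ (-(3:ℝ)/2))
    (hw : ∀ u ∈ Icc c d, |w u| ≤ S) :
    |wienerIntegralIBP c d (fun u => (q u - k) * φ u) w| ≤ 4 * C * L * √(d - c) * S := by
  set h := d - c
  have hh : 0 < h := sub_pos.2 hcd
  have hsqrt : h * h ^ (-(1:ℝ)/2) = √h := by
    rw [Real.sqrt_eq_rpow, mul_comm, ← Real.rpow_add_one hh.ne']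
    norm_num
  have hpow : h * h ^ (-(3:ℝ)/2) = h ^ (-(1:ℝ)/2) := by
    rw [mul_comm, ← Real.rpow_add_one hh.ne']
    norm_num
  have hderiv : ∀ u, deriv (fun u => (q u - k) * φ u) u
      = deriv q u * φ u + (q u - k) * deriv φ u := fun u =>
    (((hq u).hasDerivAt.sub_const k).mul (hφ u).hasDerivAt).deriv
  have hg : ∀ u ∈ Icc c d, |(q u - k) * φ u| ≤ L * h * (C * h ^ (-(1:ℝ)/2)) := fun u hu =>
    abs_mul_le_of_abs_le (hqk u hu) (hφb u hu)
  have hg' : ∀ u ∈ Icc c d, |deriv (fun u => (q u - k) * φ u) u|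
      ≤ L * (C * h ^ (-(1:ℝ)/2)) + L * h * (C * h ^ (-(3:ℝ)/2)) := fun u hu => by
    rw [hderiv]
    exact (abs_add_le _ _).trans (add_le_add (abs_mul_le_of_abs_le (hq' u hu) (hφb u hu))
      (abs_mul_le_of_abs_le (hqk u hu) (hφ'b u hu)))
  refine (abs_wienerIntegralIBP_le hcd.le hg hg' hw).trans (le_of_eq ?_)
  linear_combination (4 * L * C * S) * hsqrt + (L * C * S * h) * hpow

theorem wiener_integral_ratio_bound_general (C Mq Mqi Mq' : ℝ) (hC : 0 < C)
    (hMqi : 0 < Mqi) (hMq' : 0 ≤ Mq') :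
    ∃ K : ℝ, 0 < K ∧
      ∀ (Ω : Type) (mΩ : MeasurableSpace Ω) (P : Measure Ω),
        IsProbabilityMeasure P →
      ∀ (W : Ω → ℝ → ℝ), (∀ᵐ ω ∂P, Continuous (W ω)) →
      ∀ (a b : ℝ), a < b →
      ∀ (q : ℝ → ℝ), ContDiff ℝ 1 q →
        (∀ x ∈ Set.Icc a b, 0 < q x) →
        (∀ x ∈ Set.Icc a b, |q x| ≤ Mq) →
        (∀ x ∈ Set.Icc a b, |(q x)⁻¹| ≤ Mqi) →
        (∀ x ∈ Set.Icc a b, |deriv q x| ≤ Mq') →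
      ∀ (c d : ℝ), a ≤ c → c < d → d ≤ b →
      ∀ (φ : ℝ → ℝ), ContDiff ℝ 1 φ →
        (∀ u ∈ Set.Icc c d, |φ u| ≤ C * (d - c) ^ (-(1:ℝ)/2)) →
        (∀ u ∈ Set.Icc c d, |deriv φ u| ≤ C * (d - c) ^ (-(3:ℝ)/2)) →
      ∀ (H : Ω → ℝ → ℝ),
        (∀ ω x, H ω x = (q x)⁻¹ * wienerIntegralIBP c d (fun u => q u * φ u) (W ω)
          - wienerIntegralIBP c d φ (W ω)) →
        ∀ᵐ ω ∂P, ∀ x ∈ Set.Icc c d,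
          |H ω x| ≤ K * Real.sqrt (d - c) * ⨆ u : Set.Icc c d, |W ω (u : ℝ)| := by
  refine ⟨4 * C * Mqi * Mq' + 1, by positivity, ?_⟩
  intro Ω _ P _ W hWcont a b _ q hq hqpos _ hqib hq'b c d hac hcd hdb φ hφ hφb hφ'b H hH
  filter_upwards [hWcont] with ω hw x hx
  have hsub : Icc c d ⊆ Icc a b := Icc_subset_Icc hac hdb
  have hqx : q x ≠ 0 := (hqpos x (hsub hx)).ne'
  have hHx : H ω x = (q x)⁻¹ * wienerIntegralIBP c d (fun u => (q u - q x) * φ u) (W ω) := by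
    have hfun : (fun u => (q u - q x) * φ u) = fun u => q u * φ u - q x * φ u := by
      ext u
      ring
    rw [hH, hfun, wienerIntegralIBP_sub_const_mul (hq.mul hφ) hφ hw, mul_sub,
      inv_mul_cancel_left₀ hqx]
  set S := ⨆ u : Icc c d, |W ω u|
  have hWS : ∀ u ∈ Icc c d, |W ω u| ≤ S := fun u hu => abs_le_ciSup_Icc hw hu
  have hS : 0 ≤ S := (abs_nonneg _).trans (hWS x hx)
  have hq'cd : ∀ u ∈ Icc c d, |deriv q u| ≤ Mq' := fun u hu => hq'b u (hsub hu)
  have hqd := hq.differentiable one_ne_zero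
  have hI := abs_wienerIntegralIBP_sub_mul_le hcd hqd (hφ.differentiable one_ne_zero) hq'cd
    (fun u hu => abs_sub_le_mul_of_abs_deriv_le hqd hq'cd hx hu) hφb hφ'b hWS
  calc |H ω x| = |(q x)⁻¹| * |wienerIntegralIBP c d (fun u => (q u - q x) * φ u) (W ω)| := by
        rw [hHx, abs_mul]
    _ ≤ Mqi * (4 * C * Mq' * √(d - c) * S) :=
        mul_le_mul (hqib x (hsub hx)) hI (abs_nonneg _) hMqi.le
    _ ≤ (4 * C * Mqi * Mq' + 1) * √(d - c) * S := by
        nlinarith [mul_nonneg (Real.sqrt_nonneg (d - c)) hS]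

/-- With `q` positive `C¹` with `q, q⁻¹, q'` bounded on `[a,b]`,
`[c,d] ⊆ [a,b]` of length `h`, and `φ` `C¹` with `|φ| ≤ C h^{−1/2}`, `|φ'| ≤ C h^{−3/2}`,
the process `H(x) = q(x)⁻¹ ∫_c^d q φ dW − ∫_c^d φ dW` satisfies, almost surely,
`sup_{x∈[c,d]} |H(x)| ≤ K h^{1/2} sup_{u∈[c,d]} |W(u)|`, where `K` depends only on `C`
and the bounds on `q`, `q⁻¹`, `q'`. -/
theorem wiener_integral_ratio_bound (C Mq Mqi Mq' : ℝ) (hC : 0 < C)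
    (hMq : 0 < Mq) (hMqi : 0 < Mqi) (hMq' : 0 ≤ Mq') :
    ∃ K : ℝ, 0 < K ∧
      ∀ (Ω : Type) (mΩ : MeasurableSpace Ω) (P : Measure Ω),
        IsProbabilityMeasure P →
      ∀ (W : Ω → ℝ → ℝ), (∀ᵐ ω ∂P, Continuous (W ω)) →
      ∀ (a b : ℝ), a < b →
      ∀ (q : ℝ → ℝ), ContDiff ℝ 1 q →
        (∀ x ∈ Set.Icc a b, 0 < q x) →
        (∀ x ∈ Set.Icc a b, |q x| ≤ Mq) →
        (∀ x ∈ Set.Icc a b, |(q x)⁻¹| ≤ Mqi) →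
        (∀ x ∈ Set.Icc a b, |deriv q x| ≤ Mq') →
      ∀ (c d : ℝ), a ≤ c → c < d → d ≤ b →
      ∀ (φ : ℝ → ℝ), ContDiff ℝ 1 φ →
        (∀ u ∈ Set.Icc c d, |φ u| ≤ C * (d - c) ^ (-(1:ℝ)/2)) →
        (∀ u ∈ Set.Icc c d, |deriv φ u| ≤ C * (d - c) ^ (-(3:ℝ)/2)) →
      ∀ (H : Ω → ℝ → ℝ),
        (∀ ω x, H ω x = (q x)⁻¹ * wienerIntegralIBP c d (fun u => q u * φ u) (W ω)
          - wienerIntegralIBP c d φ (W ω)) →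
        ∀ᵐ ω ∂P, ∀ x ∈ Set.Icc c d,
          |H ω x| ≤ K * Real.sqrt (d - c) * ⨆ u : Set.Icc c d, |W ω (u : ℝ)| :=
  wiener_integral_ratio_bound_general C Mq Mqi Mq' hC hMqi hMq'
end
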